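/- arXiv:2208.04411 — 2 statements merged into one kernel-verified Lean document; each statement's English description precedes it below -/
import Mathlib

section
/- For x, y ∈ ℝ^n, the inequality xᵀN x ≤ yᵀN y holds for all positive semidefinite matrices N ∈ S₊^n if, and only if, there exists α ∈ ℝ with −1 ≤ α ≤ 1 such that x = α y. -/
/-!
Testing against the rank-one matrices `v vᵀ` gives `(v ⬝ x)² ≤ (v ⬝ y)²` for every `v`, so every
vector orthogonal to `y` is orthogonal to `x`; hence `x = c y`. Testing against the identity then
gives `c² ≤ 1` (when `y ≠ 0`). Conversely `(α y)ᵀ N (α y) = α² yᵀ N y ≤ yᵀ N y` when `α² ≤ 1` and `N ⪰ 0`.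
-/

open Matrix

section CommRing

variable {ι R : Type*} [Fintype ι] [CommRing R]

lemma dotProduct_vecMulVec_self_mulVec (v z : ι → R) :
    z ⬝ᵥ (vecMulVec v v *ᵥ z) = (v ⬝ᵥ z) ^ 2 := by
  rw [vecMulVec_mulVec, op_smul_eq_smul, dotProduct_smul, smul_eq_mul, dotProduct_comm, sq]

lemma smul_dotProduct_mulVec_smul (M : Matrix ι ι R) (a : R) (y : ι → R) :
    (a • y) ⬝ᵥ (M *ᵥ (a • y)) = a ^ 2 * (y ⬝ᵥ (M *ᵥ y)) := by
  rw [mulVec_smul, smul_dotProduct, dotProduct_smul, smul_eq_mul, smul_eq_mul, ← mul_assoc, sq]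

end CommRing

lemma exists_eq_smul_of_forall_dotProduct_eq_zero {ι K : Type*} [Fintype ι] [Field K]
    [LinearOrder K] [IsStrictOrderedRing K] {x y : ι → K}
    (h : ∀ v, v ⬝ᵥ y = 0 → v ⬝ᵥ x = 0) : ∃ c : K, x = c • y := by
  by_cases hy : y = 0
  · refine ⟨0, ?_⟩
    simpa [hy] using h x (by simp [hy])
  set c := (x ⬝ᵥ y) / (y ⬝ᵥ y)
  have hvy : (x - c • y) ⬝ᵥ y = 0 := by
    have : y ⬝ᵥ y ≠ 0 := by simpa using hy
    rw [sub_dotProduct, smul_dotProduct, smul_eq_mul, div_mul_cancel₀ _ this, sub_self]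
  have hvx := h _ hvy
  have hvv : (x - c • y) ⬝ᵥ (x - c • y) = 0 := by
    rw [dotProduct_sub, dotProduct_smul, hvx, hvy, smul_zero, sub_zero]
  exact ⟨c, sub_eq_zero.mp (dotProduct_self_eq_zero.mp hvv)⟩

/-- `xᵀNx ≤ yᵀNy` holds for all positive semidefinite matrices `N` iff
`x = α • y` for some `α ∈ [-1, 1]`. -/
theorem quadForm_le_iff_collinear (n : ℕ) (x y : Fin n → ℝ) :
    (∀ N : Matrix (Fin n) (Fin n) ℝ, N.PosSemidef →
      x ⬝ᵥ (N *ᵥ x) ≤ y ⬝ᵥ (N *ᵥ y)) ↔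
    ∃ α : ℝ, -1 ≤ α ∧ α ≤ 1 ∧ x = α • y := by
  constructor
  · intro h
    have horth (v : Fin n → ℝ) (hv : v ⬝ᵥ y = 0) : v ⬝ᵥ x = 0 := by
      have hle := h _ (by simpa using posSemidef_vecMulVec_self_star v)
      rw [dotProduct_vecMulVec_self_mulVec, dotProduct_vecMulVec_self_mulVec, hv] at hle
      exact pow_eq_zero_iff two_ne_zero |>.mp (le_antisymm (by simpa using hle) (sq_nonneg _))
    obtain ⟨c, rfl⟩ := exists_eq_smul_of_forall_dotProduct_eq_zero horth
    by_cases hy : y = 0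
    · exact ⟨0, by norm_num, by norm_num, by simp [hy]⟩
    have hyy : 0 < y ⬝ᵥ y := by
      simpa using PosDef.one.dotProduct_mulVec_pos (R := ℝ) hy
    have hc : c ^ 2 ≤ 1 := by
      have hle := h 1 PosSemidef.one
      rw [smul_dotProduct_mulVec_smul, one_mulVec] at hle
      exact (mul_le_iff_le_one_left hyy).mp hle
    obtain ⟨hc₁, hc₂⟩ := abs_le.mp (sq_le_one_iff_abs_le_one c |>.mp hc)
    exact ⟨c, hc₁, hc₂, rfl⟩
  · rintro ⟨α, hα₁, hα₂, rfl⟩ N hN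
    rw [smul_dotProduct_mulVec_smul]
    have hy : 0 ≤ y ⬝ᵥ (N *ᵥ y) := by simpa using hN.dotProduct_mulVec_nonneg y
    exact mul_le_of_le_one_left hy (sq_le_one_iff_abs_le_one α |>.mpr (abs_le.mpr ⟨hα₁, hα₂⟩))
end

section
/- Let A₀, A₁, …, A_d ∈ ℝ^{m×n}, b ∈ ℝ^m, and A(θ) = A₀ + Σ_{j=1}^d θ_j A_j. Suppose P_i ∈ ℝ^{m_i×m} (i = 1,…,d) satisfy P_i A_j = 0 for i ≠ j (i, j ∈ {1,…,d}), P₀ ∈ ℝ^{m₀×m} satisfies P₀A_j = 0 for j = 1,…,d, and there exist M_i ∈ ℝ^{m×m_i} (i = 0,…,d) with Σ_{i=0}^d M_iP_i = I. Then for any z ∈ ℝ^n the following are equivalent: (a) there exists θ ∈ {−1, +1}^d with A(θ)z = b; (b) P₀A₀z = P₀b and, for every i ∈ {1,…,d} and every symmetric matrix N_i ∈ S^{m_i}, (b − A₀z)ᵀP_iᵀN_iP_i(b − A₀z) ≤ zᵀA_iᵀP_iᵀN_iP_iA_i z, and additionally P_i A_i z ≠ 0 or P_i(b − A₀z) = 0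 for each i. -/
open Matrix

private lemma sum_mulVec' {ι : Type*} {a b : ℕ} (s : Finset ι)
    (C : ι → Matrix (Fin a) (Fin b) ℝ) (x : Fin b → ℝ) :
    (∑ j ∈ s, C j) *ᵥ x = ∑ j ∈ s, C j *ᵥ x := by
  ext k
  simp only [Finset.sum_apply, Matrix.mulVec, dotProduct, Matrix.sum_apply,
    Finset.sum_mul]
  exact Finset.sum_comm

private lemma mulVec_sum' {ι : Type*} {a b : ℕ} (s : Finset ι)
    (B : Matrix (Fin a) (Fin b) ℝ) (f : ι → Fin b → ℝ) :
    B *ᵥ (∑ j ∈ s, f j) = ∑ j ∈ s, B *ᵥ f j := by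
  ext k
  simp only [Finset.sum_apply, Matrix.mulVec, dotProduct, Finset.mul_sum]
  exact Finset.sum_comm

private lemma dot_dichotomy {k : ℕ} (a c : Fin k → ℝ)
    (h : ∀ w : Fin k → ℝ, (w ⬝ᵥ a) * (w ⬝ᵥ c) = 0) : a = 0 ∨ c = 0 := by
  by_contra hcon
  push_neg at hcon
  obtain ⟨ha, hc⟩ := hcon
  have haa : a ⬝ᵥ a ≠ 0 := fun h0 => ha ((dotProduct_self_eq_zero (R := ℝ)).mp h0)
  have hcc : c ⬝ᵥ c ≠ 0 := fun h0 => hc ((dotProduct_self_eq_zero (R := ℝ)).mp h0)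
  have hac : a ⬝ᵥ c = 0 := by
    have := h a
    exact (mul_eq_zero.mp this).resolve_left haa
  have hca : c ⬝ᵥ a = 0 := by rw [dotProduct_comm]; exact hac
  have := h (a + c)
  rw [add_dotProduct, add_dotProduct, hac, hca, add_zero, zero_add] at this
  exact (mul_eq_zero.mp this).elim haa hcc

private lemma quad_eq_pm {k : ℕ} (u v : Fin k → ℝ)
    (h : ∀ N : Matrix (Fin k) (Fin k) ℝ, N.IsSymm →
      u ⬝ᵥ (N *ᵥ u) ≤ v ⬝ᵥ (N *ᵥ v)) : u = v ∨ u = -v := by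
  have key : ∀ w : Fin k → ℝ, (w ⬝ᵥ u) * (w ⬝ᵥ u) = (w ⬝ᵥ v) * (w ⬝ᵥ v) := by
    intro w
    have hsym : (vecMulVec w w).IsSymm := by
      ext i j; simp [Matrix.transpose_apply, vecMulVec_apply, mul_comm]
    have hval : ∀ x : Fin k → ℝ, x ⬝ᵥ (vecMulVec w w *ᵥ x) = (w ⬝ᵥ x) * (w ⬝ᵥ x) := by
      intro x
      simp [Matrix.mulVec, dotProduct, vecMulVec_apply, Finset.mul_sum,
        Finset.sum_mul]
      rw [Finset.sum_comm]
      congr 1; ext i; congr 1; ext j; ring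
    have h1 := h (vecMulVec w w) hsym
    have h2 := h (-(vecMulVec w w)) (by
      unfold Matrix.IsSymm at hsym ⊢; rw [Matrix.transpose_neg, hsym])
    rw [hval, hval] at h1
    simp only [Matrix.neg_mulVec, dotProduct_neg, neg_le_neg_iff, hval] at h2
    linarith
  have hzero : ∀ w : Fin k → ℝ, (w ⬝ᵥ (u - v)) * (w ⬝ᵥ (u + v)) = 0 := by
    intro w
    have := key w
    rw [dotProduct_sub, dotProduct_add]
    ring_nf
    nlinarith [key w]
  rcases dot_dichotomy (u - v) (u + v) hzero with h' | h'
  · left; exact sub_eq_zero.mp h'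
  · right; have := add_eq_zero_iff_eq_neg.mp h'; exact this

/-- Boolean variant: under the tightness condition `∑ᵢ MᵢPᵢ = I`, there exists
`θ ∈ {-1, +1}^d` with `(A₀ + ∑ⱼ θⱼ Aⱼ) z = b` iff `P₀A₀z = P₀b`, the quadratic
inequalities hold for every symmetric `Nᵢ`, and additionally `PᵢAᵢz ≠ 0` or
`Pᵢ(b - A₀z) = 0` for each `i`. -/
theorem boolean_physics_iff_quad_ineqs (d m n m0 : ℕ) (mdim : Fin d → ℕ)
    (A0 : Matrix (Fin m) (Fin n) ℝ) (A : Fin d → Matrix (Fin m) (Fin n) ℝ)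
    (b : Fin m → ℝ)
    (P : (i : Fin d) → Matrix (Fin (mdim i)) (Fin m) ℝ)
    (P0 : Matrix (Fin m0) (Fin m) ℝ)
    (hP : ∀ i j : Fin d, i ≠ j → P i * A j = 0)
    (hP0 : ∀ j : Fin d, P0 * A j = 0)
    (M : (i : Fin d) → Matrix (Fin m) (Fin (mdim i)) ℝ)
    (M0 : Matrix (Fin m) (Fin m0) ℝ)
    (hM : M0 * P0 + ∑ i, M i * P i = 1)
    (z : Fin n → ℝ) :
    (∃ θ : Fin d → ℝ, (∀ i, θ i = -1 ∨ θ i = 1) ∧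
        (A0 + ∑ j, θ j • A j) *ᵥ z = b) ↔
    (P0 *ᵥ (A0 *ᵥ z) = P0 *ᵥ b ∧
      (∀ i : Fin d, ∀ N : Matrix (Fin (mdim i)) (Fin (mdim i)) ℝ,
        N.IsSymm →
        (P i *ᵥ (b - A0 *ᵥ z)) ⬝ᵥ (N *ᵥ (P i *ᵥ (b - A0 *ᵥ z))) ≤
          (P i *ᵥ (A i *ᵥ z)) ⬝ᵥ (N *ᵥ (P i *ᵥ (A i *ᵥ z)))) ∧
      (∀ i : Fin d, P i *ᵥ (A i *ᵥ z) ≠ 0 ∨ P i *ᵥ (b - A0 *ᵥ z) = 0)) := by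
  constructor
  · rintro ⟨θ, hθpm, hθ⟩
    have hθsq : ∀ i, θ i * θ i = 1 := by
      intro i; rcases hθpm i with h | h <;> rw [h] <;> ring
    -- b - A0 z = ∑ θ_j • A_j z
    have hbz : b - A0 *ᵥ z = ∑ j, θ j • (A j *ᵥ z) := by
      rw [← hθ, Matrix.add_mulVec, sum_mulVec']
      simp [Matrix.smul_mulVec]
    have hPkey : ∀ i, P i *ᵥ (b - A0 *ᵥ z) = θ i • (P i *ᵥ (A i *ᵥ z)) := by
      intro i
      rw [hbz, mulVec_sum']
      rw [Finset.sum_eq_single i]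
      · rw [Matrix.mulVec_smul]
      · intro j _ hji
        rw [Matrix.mulVec_smul, Matrix.mulVec_mulVec, hP i j (Ne.symm hji),
          Matrix.zero_mulVec, smul_zero]
      · intro h; exact absurd (Finset.mem_univ i) h
    refine ⟨?_, ?_, ?_⟩
    · have : P0 *ᵥ (b - A0 *ᵥ z) = 0 := by
        rw [hbz, mulVec_sum']
        apply Finset.sum_eq_zero
        intro j _
        rw [Matrix.mulVec_smul, Matrix.mulVec_mulVec, hP0 j, Matrix.zero_mulVec, smul_zero]
      rw [Matrix.mulVec_sub] at this
      have := sub_eq_zero.mp this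
      rw [this]
    · intro i N hN
      rw [hPkey i]
      rw [Matrix.mulVec_smul, dotProduct_smul, smul_dotProduct]
      rw [smul_eq_mul, smul_eq_mul, ← mul_assoc, hθsq i, one_mul]
    · intro i
      by_cases hv : P i *ᵥ (A i *ᵥ z) = 0
      · right; rw [hPkey i, hv, smul_zero]
      · left; exact hv
  · rintro ⟨h0, hq, _⟩
    -- for each i, get θ i
    have hkey : ∀ i : Fin d, ∃ t : ℝ, (t = -1 ∨ t = 1) ∧
        P i *ᵥ (b - A0 *ᵥ z) = t • (P i *ᵥ (A i *ᵥ z)) := by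
      intro i
      rcases quad_eq_pm _ _ (hq i) with h | h
      · exact ⟨1, Or.inr rfl, by rw [h, one_smul]⟩
      · exact ⟨-1, Or.inl rfl, by rw [h, neg_one_smul]⟩
    choose θ hθpm hθeq using hkey
    refine ⟨θ, hθpm, ?_⟩
    set r : Fin m → ℝ := b - (A0 + ∑ j, θ j • A j) *ᵥ z with hr
    have hPir : ∀ i, P i *ᵥ r = 0 := by
      intro i
      have : r = (b - A0 *ᵥ z) - ∑ j, θ j • (A j *ᵥ z) := by
        rw [hr, Matrix.add_mulVec, sum_mulVec']
        simp [Matrix.smul_mulVec, sub_sub]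
      rw [this, Matrix.mulVec_sub, mulVec_sum', hθeq i]
      rw [Finset.sum_eq_single i]
      · rw [Matrix.mulVec_smul, sub_self]
      · intro j _ hji
        rw [Matrix.mulVec_smul, Matrix.mulVec_mulVec, hP i j (Ne.symm hji),
          Matrix.zero_mulVec, smul_zero]
      · intro h; exact absurd (Finset.mem_univ i) h
    have hP0r : P0 *ᵥ r = 0 := by
      have : r = (b - A0 *ᵥ z) - ∑ j, θ j • (A j *ᵥ z) := by
        rw [hr, Matrix.add_mulVec, sum_mulVec']
        simp [Matrix.smul_mulVec, sub_sub]
      rw [this, Matrix.mulVec_sub, mulVec_sum', Matrix.mulVec_sub, h0, sub_self]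
      rw [zero_sub, neg_eq_zero]
      apply Finset.sum_eq_zero
      intro j _
      rw [Matrix.mulVec_smul, Matrix.mulVec_mulVec, hP0 j, Matrix.zero_mulVec, smul_zero]
    have : r = 0 := by
      have h1 : (1 : Matrix (Fin m) (Fin m) ℝ) *ᵥ r = r := Matrix.one_mulVec r
      rw [← hM, Matrix.add_mulVec, sum_mulVec'] at h1
      rw [← h1]
      rw [← Matrix.mulVec_mulVec, hP0r, Matrix.mulVec_zero, zero_add]
      apply Finset.sum_eq_zero
      intro j _
      rw [← Matrix.mulVec_mulVec, hPir j, Matrix.mulVec_zero]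
    exact (sub_eq_zero.mp this).symm
end
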